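/- For a K-sparse set E in the complex plane and any z ∈ ℂ, letting s be a closest point of E to z, one has ∑_{m ∈ E, m ≠ s} 1/|z−m|⁴ ≤ 800·K⁻⁴. -/

import Mathlib

/-! The discs of radius `K / 2` about the points of `E` are disjoint. Let `F ⊆ E \ {s}` be finite
and `m₀` its point farthest from `z`, at distance `r`. The discs about the `#F + 1` points of
`F ∪ {s}` lie in the disc of radius `r + K / 2` about `z`, and `r ≥ K / 2` because `|m₀ - s| ≥ K`
while `s` is at least as close to `z` as `m₀`; comparing areas gives `(#F + 1) K² ≤ 16 r²`.
Peeling off farthest points one at a time, the `n`-th closest point of `E \ {s}` contributes at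
most `256 K⁻⁴ / (n + 1)²`, and `∑_{n ≥ 2} n⁻² ≤ 1`. -/

/-- A set `E ⊆ ℂ` is `K`-sparse if any two distinct points of `E` are at
distance at least `K`. -/
def KSparse (K : ℝ) (E : Set ℂ) : Prop :=
  ∀ m ∈ E, ∀ m' ∈ E, m ≠ m' → K ≤ ‖m - m'‖

open Metric MeasureTheory Module Finset

theorem card_mul_pow_le_of_separated {E : Type*} [NormedAddCommGroup E] [NormedSpace ℝ E]
    [FiniteDimensional ℝ E] {K r : ℝ} (hK : 0 < K) (hr : 0 ≤ r) {G : Finset E} {z : E}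
    (hsep : ∀ m ∈ G, ∀ m' ∈ G, m ≠ m' → K ≤ dist m m') (hG : ∀ m ∈ G, dist m z ≤ r) :
    #G * (K / 2) ^ finrank ℝ E ≤ (r + K / 2) ^ finrank ℝ E := by
  borelize E
  let μ : Measure E := Measure.addHaar
  have hdisj : (G : Set E).PairwiseDisjoint fun m ↦ ball m (K / 2) := fun m hm m' hm' hne ↦
    ball_disjoint_ball (by linarith [hsep m hm m' hm' hne])
  have hsub : ⋃ m ∈ G, ball m (K / 2) ⊆ ball z (r + K / 2) :=
    Set.iUnion₂_subset fun m hm ↦ ball_subset_ball' (by linarith [hG m hm])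
  have hvol := measure_mono (μ := μ) hsub
  rw [measure_biUnion_finset hdisj fun _ _ ↦ measurableSet_ball,
    sum_congr rfl fun m _ ↦ Measure.addHaar_ball_of_pos μ m (half_pos hK), sum_const, nsmul_eq_mul,
    Measure.addHaar_ball_of_pos μ z (by positivity), ← mul_assoc,
    ENNReal.mul_le_mul_iff_left (measure_ball_pos μ 0 one_pos).ne' measure_ball_lt_top.ne,
    ← ENNReal.ofReal_natCast, ← ENNReal.ofReal_mul (by positivity),
    ENNReal.ofReal_le_ofReal_iff (by positivity)] at hvol
  exact hvol

theorem sum_Ioc_one_inv_sq_le_one (n : ℕ) : ∑ i ∈ Ioc 1 n, ((i : ℝ) ^ 2)⁻¹ ≤ 1 := by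
  rw [← Ioo_add_one_right_eq_Ioc]
  exact (sum_Ioo_inv_sq_le 1 (n + 1)).trans_eq (by norm_num)

namespace KSparse

variable {K : ℝ} {E : Set ℂ}

theorem mono {F : Set ℂ} (hE : KSparse K E) (hFE : F ⊆ E) : KSparse K F :=
  fun m hm m' hm' hne ↦ hE m (hFE hm) m' (hFE hm') hne

variable {z s : ℂ}

theorem card_add_one_mul_sq_le (hK : 0 < K) (hE : KSparse K E) (hs : s ∈ E)
    (hclosest : ∀ m ∈ E, ‖z - s‖ ≤ ‖z - m‖) {F : Finset ℂ} (hF : ↑F ⊆ E \ {s})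
    {m₀ : ℂ} (hm₀ : m₀ ∈ F) (hfar : ∀ m ∈ F, ‖z - m‖ ≤ ‖z - m₀‖) :
    (#F + 1) * K ^ 2 ≤ 16 * ‖z - m₀‖ ^ 2 := by
  have hsF : s ∉ F := fun h ↦ (hF h).2 rfl
  have hG : KSparse K ↑(insert s F) := hE.mono <| by
    rw [coe_insert]; exact Set.insert_subset hs (hF.trans Set.sdiff_subset)
  have hpack := card_mul_pow_le_of_separated hK (norm_nonneg (z - m₀)) (G := insert s F) (z := z)
    (fun m hm m' hm' hne ↦ (hG m hm m' hm' hne).trans_eq (dist_eq_norm m m').symm)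
    (fun m hm ↦ by
      rw [dist_comm, dist_eq_norm]
      rcases mem_insert.mp hm with rfl | hm
      · exact hclosest m₀ (hF hm₀).1
      · exact hfar m hm)
  rw [Complex.finrank_real_complex, card_insert_of_notMem hsF, Nat.cast_succ] at hpack
  have hK_le : K ≤ 2 * ‖z - m₀‖ := calc
    K ≤ ‖m₀ - s‖ := hE m₀ (hF hm₀).1 s hs (hF hm₀).2
    _ ≤ ‖m₀ - z‖ + ‖z - s‖ := norm_sub_le_norm_sub_add_norm_sub m₀ z s
    _ ≤ 2 * ‖z - m₀‖ := by rw [norm_sub_rev m₀ z]; linarith [hclosest m₀ (hF hm₀).1]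
  nlinarith

theorem sum_one_div_pow_four_le (hK : 0 < K) (hE : KSparse K E) (hs : s ∈ E)
    (hclosest : ∀ m ∈ E, ‖z - s‖ ≤ ‖z - m‖) (F : Finset ℂ) (hF : ↑F ⊆ E \ {s}) :
    ∑ m ∈ F, 1 / ‖z - m‖ ^ 4 ≤ 256 / K ^ 4 * ∑ i ∈ Ioc 1 (#F + 1), ((i : ℝ) ^ 2)⁻¹ := by
  induction F using Finset.induction_on_max_value (fun m ↦ ‖z - m‖) with
  | empty => simp
  | insert a F haF hfar ih =>
    have ha := hE.card_add_one_mul_sq_le hK hs hclosest hF (mem_insert_self a F)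
      (by simpa using hfar)
    rw [card_insert_of_notMem haF, Nat.cast_succ] at ha
    have hterm : 1 / ‖z - a‖ ^ 4 ≤ 256 / K ^ 4 * (((#F + 1 + 1 : ℕ) : ℝ) ^ 2)⁻¹ := by
      have hn : (0 : ℝ) < #F + 1 + 1 := by positivity
      have hza : 0 < ‖z - a‖ ^ 2 := by linarith [mul_pos hn (pow_pos hK 2)]
      calc 1 / ‖z - a‖ ^ 4 = (1 / ‖z - a‖ ^ 2) ^ 2 := by ring
        _ ≤ (16 / ((#F + 1 + 1) * K ^ 2)) ^ 2 := by
          refine pow_le_pow_left₀ (by positivity) ?_ 2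
          rw [div_le_div_iff₀ hza (by positivity)]
          linarith
        _ = 256 / K ^ 4 * (((#F + 1 + 1 : ℕ) : ℝ) ^ 2)⁻¹ := by push_cast; field_simp; ring
    rw [sum_insert haF, card_insert_of_notMem haF, sum_Ioc_succ_top (by omega), mul_add]
    linarith [ih ((coe_subset.mpr (subset_insert a F)).trans hF)]

end KSparse

theorem sum_fourth_inverse_dist_le (K : ℝ) (hK : 0 < K) (E : Set ℂ)
    (hE : KSparse K E) (z : ℂ) (s : ℂ) (hs : s ∈ E)
    (hclosest : ∀ m ∈ E, ‖z - s‖ ≤ ‖z - m‖) :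
    ∑' m : ↥(E \ {s}), 1 / ‖z - (m : ℂ)‖ ^ 4 ≤ 800 / K ^ 4 := by
  refine tsum_le_of_sum_le' (by positivity) fun u ↦ ?_
  have hu : (u.map (Function.Embedding.subtype _) : Set ℂ) ⊆ E \ {s} := by
    rw [coe_map]
    rintro _ ⟨m, -, rfl⟩
    exact m.2
  calc ∑ m ∈ u, 1 / ‖z - (m : ℂ)‖ ^ 4
      = ∑ m ∈ u.map (Function.Embedding.subtype _), 1 / ‖z - m‖ ^ 4 := by
        rw [sum_map, Function.Embedding.coe_subtype]
    _ ≤ 256 / K ^ 4 * 1 := by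
      grw [hE.sum_one_div_pow_four_le hK hs hclosest _ hu, sum_Ioc_one_inv_sq_le_one]
    _ ≤ 800 / K ^ 4 := by rw [mul_one]; gcongr; norm_num
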